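/- arXiv:2310.12056 — 6 statements merged into one kernel-verified Lean document; each statement's English description precedes it below -/
import Mathlib

section
/- (Theorem 1, part 1.) Under the general model, for each t ∈ {1,…,T−1}, the development factor estimator f̂_t = (Σ_{i=1}^{T−t} C^α_{i,t+1})/(Σ_{i=1}^{T−t} C^α_{i,t}) converges almost surely, as α → ∞, to f_t = E[Z·1{D ≤ t+1}]/E[Z·1{D ≤ t}]. -/
open MeasureTheory ProbabilityTheory Filter Finset Topology

noncomputable section

namespace ChainLadder

/-- Convergence in distribution of a family of random elements `X α`, as `α → ∞`,
to the law `ν`, stated as weak convergence of the laws. -/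
def TendstoInDist {Ω E : Type*} [MeasurableSpace Ω] [MeasurableSpace E] [TopologicalSpace E]
    (μ : Measure Ω) (X : ℝ → Ω → E) (ν : Measure E) : Prop :=
  ∀ f : BoundedContinuousFunction E ℝ,
    Tendsto (fun α => ∫ ω, f (X α ω) ∂μ) atTop (𝓝 (∫ x, f x ∂ν))

/-- The chi-squared distribution with `n` degrees of freedom, realized as the law of the
sum of squares of `n` independent standard normal random variables. -/
def chiSq (n : ℕ) : Measure ℝ :=
  (Measure.pi fun _ : Fin n => gaussianReal 0 1).map (fun x => ∑ i, (x i) ^ 2)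

/-- `ν` is the centered `n`-dimensional normal distribution with covariance matrix `S`:
every linear functional has a (possibly degenerate) centered real normal distribution with the
corresponding variance. -/
def IsCenteredGaussianLaw {n : ℕ} (ν : Measure (Fin n → ℝ))
    (S : Matrix (Fin n) (Fin n) ℝ) : Prop :=
  ∀ l : Fin n → ℝ,
    ν.map (fun x => ∑ i, l i * x i) = gaussianReal 0 (∑ s, ∑ t, l s * S s t * l t).toNNReal

/-- A homogeneous Poisson process with intensity `r` (indexed by `α ≥ 0`). -/
def IsPoissonProcess {Ω : Type*} [MeasurableSpace Ω] (μ : Measure Ω)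
    (N : ℝ → Ω → ℕ) (r : ℝ) : Prop :=
  (∀ α, Measurable (N α)) ∧
  (∀ᵐ ω ∂μ, N 0 ω = 0) ∧
  (∀ᵐ ω ∂μ, MonotoneOn (fun α => N α ω) (Set.Ici (0 : ℝ))) ∧
  (∀ s t : ℝ, 0 ≤ s → s ≤ t →
    μ.map (fun ω => N t ω - N s ω) = ((poissonPMF (r * (t - s)).toNNReal).toMeasure)) ∧
  (∀ n : ℕ, ∀ a : Fin (n + 1) → ℝ, 0 ≤ a 0 → Monotone a →
    iIndepFun
      (fun i : Fin n => fun ω => N (a i.succ) ω - N (a i.castSucc) ω) μ)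

/-- GM1–GM3: the basic claims model (without any exposure asymptotics). -/
structure ClaimsBase (Ω : Type*) [MeasurableSpace Ω] (μ : Measure Ω) (T : ℕ) where
  M : ℕ → ℝ → Ω → ℕ
  D : ℕ → ℕ → Ω → ℕ
  Z : ℕ → ℕ → Ω → ℝ
  D0 : Ω → ℕ
  Z0 : Ω → ℝ
  prob : IsProbabilityMeasure μ
  hT : 2 ≤ T
  meas_M : ∀ i α, Measurable (M i α)
  meas_D : ∀ i k, Measurable (D i k)
  meas_Z : ∀ i k, Measurable (Z i k)
  meas_D0 : Measurable D0
  meas_Z0 : Measurable Z0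
  range_D : ∀ i k, ∀ᵐ ω ∂μ, D i k ω ∈ Finset.Icc 1 T
  range_D0 : ∀ᵐ ω ∂μ, D0 ω ∈ Finset.Icc 1 T
  iid : ∀ i, iIndepFun (fun k ω => (D i k ω, Z i k ω)) μ
  ident : ∀ i k, IdentDistrib (fun ω => (D i k ω, Z i k ω)) (fun ω => (D0 ω, Z0 ω)) μ μ
  sq_int : Integrable (fun ω => (Z0 ω) ^ 2) μ
  pos_mean : ∀ t ∈ Finset.Icc 1 T, 0 < ∫ ω, (if D0 ω = t then Z0 ω else 0) ∂μ
  indep_col : ∀ i, Indep (⨆ α : ℝ, MeasurableSpace.comap (M i α) ⊤)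
      (⨆ k : ℕ, MeasurableSpace.comap (fun ω => (D i k ω, Z i k ω)) inferInstance) μ
  indep_rows : iIndep (fun i : ℕ =>
      (⨆ α : ℝ, MeasurableSpace.comap (M i α) ⊤) ⊔
      (⨆ k : ℕ, MeasurableSpace.comap (fun ω => (D i k ω, Z i k ω)) inferInstance)) μ

/-- GM1–GM4: the general model. -/
structure GeneralModel (Ω : Type*) [MeasurableSpace Ω] (μ : Measure Ω) (T : ℕ)
    extends ClaimsBase Ω μ T where
  lam : ℕ → ℝ
  lam_pos : ∀ i ∈ Finset.Icc 1 T, 0 < lam i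
  M_lln : ∀ i ∈ Finset.Icc 1 T, ∀ᵐ ω ∂μ,
    Tendsto (fun α : ℝ => (M i α ω : ℝ) / α) atTop (𝓝 (lam i))

/-- SM1–SM3: the special model. -/
structure SpecialModel (Ω : Type*) [MeasurableSpace Ω] (μ : Measure Ω) (T : ℕ)
    extends ClaimsBase Ω μ T where
  lam : ℕ → ℝ
  lam_pos : ∀ i ∈ Finset.Icc 1 T, 0 < lam i
  indepDZ : IndepFun D0 Z0 μ
  poisson : ∀ i ∈ Finset.Icc 1 T, IsPoissonProcess μ (M i) (lam i)

variable {Ω : Type*} [MeasurableSpace Ω] {μ : Measure Ω} {T : ℕ}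

/-- Accumulated claims amount `C^α_{i,t}`. -/
def ClaimsBase.C (gm : ClaimsBase Ω μ T) (i t : ℕ) (α : ℝ) (ω : Ω) : ℝ :=
  ∑ k ∈ Finset.range (gm.M i α ω), (if gm.D i k ω ≤ t then gm.Z i k ω else 0)

/-- The chain ladder development factor estimator `f̂_t`. -/
def ClaimsBase.fhat (gm : ClaimsBase Ω μ T) (t : ℕ) (α : ℝ) (ω : Ω) : ℝ :=
  (∑ i ∈ Finset.Icc 1 (T - t), gm.C i (t + 1) α ω) /
    (∑ i ∈ Finset.Icc 1 (T - t), gm.C i t α ω)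

/-- The limiting development factor `f_t = E[Z 1{D ≤ t+1}] / E[Z 1{D ≤ t}]`. -/
def ClaimsBase.flim (gm : ClaimsBase Ω μ T) (t : ℕ) : ℝ :=
  (∫ ω, (if gm.D0 ω ≤ t + 1 then gm.Z0 ω else 0) ∂μ) /
    (∫ ω, (if gm.D0 ω ≤ t then gm.Z0 ω else 0) ∂μ)

/-- Mack's variance parameter estimator `σ̂²_t`. -/
def ClaimsBase.sigmahat (gm : ClaimsBase Ω μ T) (t : ℕ) (α : ℝ) (ω : Ω) : ℝ :=
  (((T - t - 1 : ℕ) : ℝ))⁻¹ *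
    ∑ i ∈ Finset.Icc 1 (T - t),
      gm.C i t α ω * (gm.C i (t + 1) α ω / gm.C i t α ω - gm.fhat t α ω) ^ 2

/-- The limiting variance parameter `σ²_t`. -/
def ClaimsBase.sigmaSq (gm : ClaimsBase Ω μ T) (t : ℕ) : ℝ :=
  (gm.flim t - 1) *
    ((∫ ω, (if gm.D0 ω = t + 1 then (gm.Z0 ω) ^ 2 else 0) ∂μ) /
        (∫ ω, (if gm.D0 ω = t + 1 then gm.Z0 ω else 0) ∂μ) +
      (gm.flim t - 1) *
        ((∫ ω, (if gm.D0 ω ≤ t then (gm.Z0 ω) ^ 2 else 0) ∂μ) /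
          (∫ ω, (if gm.D0 ω ≤ t then gm.Z0 ω else 0) ∂μ)))

/-- The σ-algebra `𝒟^α` generated by the observed run-off triangle. -/
def ClaimsBase.triSigma (gm : ClaimsBase Ω μ T) (α : ℝ) : MeasurableSpace Ω :=
  ⨆ j ∈ Finset.Icc 1 T, ⨆ t ∈ Finset.Icc 1 T, ⨆ _ : j + t ≤ T + 1,
    MeasurableSpace.comap (gm.C j t α) inferInstance

end ChainLadder

namespace ChainLadder
variable {Ω : Type*} [MeasurableSpace Ω] {μ : MeasureTheory.Measure Ω} {T : ℕ}

/-- `E[Z]` for the generic claim size. -/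
def ClaimsBase.meanZ (gm : ClaimsBase Ω μ T) : ℝ := ∫ ω, gm.Z0 ω ∂μ

/-- `E[Z²]` for the generic claim size. -/
def ClaimsBase.meanZsq (gm : ClaimsBase Ω μ T) : ℝ := ∫ ω, (gm.Z0 ω) ^ 2 ∂μ

/-- `E[Z·1{D ≤ t}]`. -/
def ClaimsBase.meanZle (gm : ClaimsBase Ω μ T) (t : ℕ) : ℝ :=
  ∫ ω, (if gm.D0 ω ≤ t then gm.Z0 ω else 0) ∂μ

/-- `E[Z²·1{D ≤ t}]`. -/
def ClaimsBase.meanZsqle (gm : ClaimsBase Ω μ T) (t : ℕ) : ℝ :=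
  ∫ ω, (if gm.D0 ω ≤ t then (gm.Z0 ω) ^ 2 else 0) ∂μ

/-- `E[Z·1{D = t}]`. -/
def ClaimsBase.meanZeq (gm : ClaimsBase Ω μ T) (t : ℕ) : ℝ :=
  ∫ ω, (if gm.D0 ω = t then gm.Z0 ω else 0) ∂μ

/-- `E[Z²·1{D = t}]`. -/
def ClaimsBase.meanZsqeq (gm : ClaimsBase Ω μ T) (t : ℕ) : ℝ :=
  ∫ ω, (if gm.D0 ω = t then (gm.Z0 ω) ^ 2 else 0) ∂μ

/-- `P(D ≤ t)`. -/
def ClaimsBase.probLe (gm : ClaimsBase Ω μ T) (t : ℕ) : ℝ := (μ {ω | gm.D0 ω ≤ t}).toReal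

/-- `P(D > t)`. -/
def ClaimsBase.probGt (gm : ClaimsBase Ω μ T) (t : ℕ) : ℝ := (μ {ω | t < gm.D0 ω}).toReal

/-- `P(D = t)`. -/
def ClaimsBase.probEq (gm : ClaimsBase Ω μ T) (t : ℕ) : ℝ := (μ {ω | gm.D0 ω = t}).toReal

/-- `E[C^α_{i,t}]`. -/
def ClaimsBase.EC (gm : ClaimsBase Ω μ T) (i t : ℕ) (α : ℝ) : ℝ := ∫ ω, gm.C i t α ω ∂μ

/-- `E[M^α_i]`. -/
def ClaimsBase.EM (gm : ClaimsBase Ω μ T) (i : ℕ) (α : ℝ) : ℝ := ∫ ω, (gm.M i α ω : ℝ) ∂μ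

/-- `∏_{s=a}^{b} f_s` (limiting development factors). -/
def ClaimsBase.flimProd (gm : ClaimsBase Ω μ T) (a b : ℕ) : ℝ :=
  ∏ s ∈ Finset.Icc a b, gm.flim s

/-- `∏_{s=a}^{b} f̂_s` (estimated development factors). -/
def ClaimsBase.fhatProd (gm : ClaimsBase Ω μ T) (a b : ℕ) (α : ℝ) (ω : Ω) : ℝ :=
  ∏ s ∈ Finset.Icc a b, gm.fhat s α ω

/-- `H^α = α^{-1/2}(C^α_{i,T-i+1} - E[C^α_{i,T-i+1}])`. -/
def ClaimsBase.Hstd (gm : ClaimsBase Ω μ T) (i : ℕ) (α : ℝ) (ω : Ω) : ℝ :=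
  (Real.sqrt α)⁻¹ * (gm.C i (T - i + 1) α ω - gm.EC i (T - i + 1) α)

/-- The renewal counting process `M^α = sup{m ≥ 1 : Σ_{k=1}^m Y_k ≤ α}`. -/
def renewalCount {Ω : Type*} (Y : ℕ → Ω → ℝ) (α : ℝ) (ω : Ω) : ℕ :=
  sSup {m : ℕ | 1 ≤ m ∧ ∑ k ∈ Finset.range m, Y k ω ≤ α}

end ChainLadder

open ChainLadder

namespace ChainLadder

variable {Ω : Type*} [MeasurableSpace Ω] {μ : MeasureTheory.Measure Ω} {T : ℕ}

lemma ClaimsBase.integrable_Z0 (gm : ClaimsBase Ω μ T) : Integrable gm.Z0 μ := by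
  have := gm.prob
  exact ((memLp_two_iff_integrable_sq gm.meas_Z0.aestronglyMeasurable).mpr
    gm.sq_int).integrable one_le_two

lemma ClaimsBase.integrable_ite_le (gm : ClaimsBase Ω μ T) (t : ℕ) :
    Integrable (fun ω => if gm.D0 ω ≤ t then gm.Z0 ω else 0) μ := by
  have h : (fun ω => if gm.D0 ω ≤ t then gm.Z0 ω else 0)
      = Set.indicator {ω | gm.D0 ω ≤ t} gm.Z0 := by
    funext ω; simp [Set.indicator_apply, Set.mem_setOf_eq]
  rw [h]
  exact gm.integrable_Z0.indicator (gm.meas_D0 measurableSet_Iic)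

lemma ClaimsBase.integrable_ite_eq (gm : ClaimsBase Ω μ T) (s : ℕ) :
    Integrable (fun ω => if gm.D0 ω = s then gm.Z0 ω else 0) μ := by
  have h : (fun ω => if gm.D0 ω = s then gm.Z0 ω else 0)
      = Set.indicator {ω | gm.D0 ω = s} gm.Z0 := by
    funext ω; simp [Set.indicator_apply, Set.mem_setOf_eq]
  rw [h]
  exact gm.integrable_Z0.indicator (gm.meas_D0 (measurableSet_singleton s))

lemma ClaimsBase.meanZle_pos' (gm : ClaimsBase Ω μ T) {t : ℕ} (ht1 : 1 ≤ t) (ht2 : t ≤ T) :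
    0 < ∫ ω, (if gm.D0 ω ≤ t then gm.Z0 ω else 0) ∂μ := by
  have hcongr : ∫ ω, (if gm.D0 ω ≤ t then gm.Z0 ω else 0) ∂μ
      = ∑ s ∈ Finset.Icc 1 t, ∫ ω, (if gm.D0 ω = s then gm.Z0 ω else 0) ∂μ := by
    rw [← integral_finset_sum _ (fun s _ => gm.integrable_ite_eq s)]
    refine integral_congr_ae ?_
    filter_upwards [gm.range_D0] with ω hω
    rw [Finset.sum_ite_eq (Finset.Icc 1 t) (gm.D0 ω) (fun _ => gm.Z0 ω)]
    have h1 : 1 ≤ gm.D0 ω := (Finset.mem_Icc.mp hω).1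
    by_cases h : gm.D0 ω ≤ t <;> simp [Finset.mem_Icc, h, h1]
  rw [hcongr]
  refine Finset.sum_pos (fun s hs => ?_) ⟨1, Finset.mem_Icc.mpr ⟨le_refl 1, ht1⟩⟩
  exact gm.pos_mean s (Finset.mem_Icc.mpr
    ⟨(Finset.mem_Icc.mp hs).1, le_trans (Finset.mem_Icc.mp hs).2 ht2⟩)

lemma GeneralModel.C_div_tendsto (gm : GeneralModel Ω μ T) {i : ℕ} (hi : i ∈ Finset.Icc 1 T)
    (t : ℕ) :
    ∀ᵐ ω ∂μ, Tendsto (fun α : ℝ => gm.toClaimsBase.C i t α ω / α) atTop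
      (𝓝 (gm.lam i * ∫ ω, (if gm.D0 ω ≤ t then gm.Z0 ω else 0) ∂μ)) := by
  set X : ℕ → Ω → ℝ := fun k ω => if gm.D i k ω ≤ t then gm.Z i k ω else 0 with hX
  set g : ℕ × ℝ → ℝ := fun p => if p.1 ≤ t then p.2 else 0 with hg
  have hgm : Measurable g :=
    Measurable.ite (measurable_fst measurableSet_Iic) measurable_snd measurable_const
  have hidk : ∀ k, IdentDistrib (X k) (fun ω => if gm.D0 ω ≤ t then gm.Z0 ω else 0) μ μ :=
    fun k => (gm.ident i k).comp hgm
  have hident : ∀ k, IdentDistrib (X k) (X 0) μ μ := fun k => (hidk k).trans (hidk 0).symm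
  have hindep : Pairwise (Function.onFun (IndepFun · · μ) X) := fun j k hjk =>
    ((gm.iid i).comp (fun _ => g) (fun _ => hgm)).indepFun hjk
  have hint : Integrable (X 0) μ :=
    (hidk 0).integrable_iff.mpr (gm.toClaimsBase.integrable_ite_le t)
  have hmean : ∫ ω, X 0 ω ∂μ = ∫ ω, (if gm.D0 ω ≤ t then gm.Z0 ω else 0) ∂μ :=
    (hidk 0).integral_eq
  have hslln := ProbabilityTheory.strong_law_ae X hint hindep hident
  filter_upwards [hslln, gm.M_lln i hi] with ω hs hM
  have hlam := gm.lam_pos i hi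
  have hMtop : Tendsto (fun α : ℝ => gm.M i α ω) atTop atTop := by
    rw [← tendsto_natCast_atTop_iff (R := ℝ)]
    have h1 : Tendsto (fun α : ℝ => (gm.M i α ω : ℝ) / α * α) atTop atTop :=
      Tendsto.pos_mul_atTop hlam hM tendsto_id
    refine h1.congr' ?_
    filter_upwards [eventually_gt_atTop (0 : ℝ)] with α hα
    field_simp
  have h2 : Tendsto (fun α : ℝ =>
        ((gm.M i α ω : ℝ))⁻¹ • ∑ k ∈ Finset.range (gm.M i α ω), X k ω)
      atTop (𝓝 (∫ ω, X 0 ω ∂μ)) := hs.comp hMtop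
  have h3 := hM.mul h2
  rw [hmean] at h3
  refine h3.congr' ?_
  filter_upwards [hMtop.eventually_ge_atTop 1, eventually_gt_atTop (0 : ℝ)] with α hα1 hα0
  have hMne : ((gm.M i α ω : ℝ)) ≠ 0 := by
    exact_mod_cast Nat.one_le_iff_ne_zero.mp hα1
  show (gm.M i α ω : ℝ) / α * (((gm.M i α ω : ℝ))⁻¹ •
      ∑ k ∈ Finset.range (gm.M i α ω), X k ω) = gm.toClaimsBase.C i t α ω / α
  have hC : gm.toClaimsBase.C i t α ω = ∑ k ∈ Finset.range (gm.M i α ω), X k ω := rfl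
  rw [hC, smul_eq_mul]
  field_simp

end ChainLadder

/-- Theorem 1, part 1: a.s. convergence of the development factor estimators. -/
theorem development_factors_strong_law
    {Ω : Type*} [MeasurableSpace Ω] {μ : Measure Ω} {T : ℕ}
    (gm : GeneralModel Ω μ T) :
    ∀ t ∈ Finset.Icc 1 (T - 1),
      ∀ᵐ ω ∂μ, Tendsto (fun α : ℝ => gm.toClaimsBase.fhat t α ω)
        atTop (𝓝 (gm.toClaimsBase.flim t)) := by
  intro t ht
  obtain ⟨ht1, ht2⟩ := Finset.mem_Icc.mp ht
  have hT := gm.hT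
  set m1 : ℝ := ∫ ω, (if gm.D0 ω ≤ t then gm.Z0 ω else 0) ∂μ with hm1
  set m2 : ℝ := ∫ ω, (if gm.D0 ω ≤ t + 1 then gm.Z0 ω else 0) ∂μ with hm2
  have hm1pos : 0 < m1 := gm.toClaimsBase.meanZle_pos' ht1 (by omega)
  have hm2pos : 0 < m2 := gm.toClaimsBase.meanZle_pos' (by omega) (by omega)
  have hkey : ∀ᵐ ω ∂μ, ∀ i, i ∈ Finset.Icc 1 (T - t) →
      Tendsto (fun α : ℝ => gm.toClaimsBase.C i t α ω / α) atTop (𝓝 (gm.lam i * m1)) ∧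
      Tendsto (fun α : ℝ => gm.toClaimsBase.C i (t + 1) α ω / α) atTop
        (𝓝 (gm.lam i * m2)) := by
    rw [ae_all_iff]
    intro i
    by_cases hi : i ∈ Finset.Icc 1 (T - t)
    · have hi' : i ∈ Finset.Icc 1 T := by
        simp only [Finset.mem_Icc] at hi ⊢; omega
      filter_upwards [gm.C_div_tendsto hi' t, gm.C_div_tendsto hi' (t + 1)] with ω h1 h2 _
      exact ⟨h1, h2⟩
    · filter_upwards with ω h
      exact absurd h hi
  filter_upwards [hkey] with ω hω
  set L : ℝ := ∑ i ∈ Finset.Icc 1 (T - t), gm.lam i with hL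
  have hLpos : 0 < L := by
    refine Finset.sum_pos (fun i hi => gm.lam_pos i ?_) ⟨1, Finset.mem_Icc.mpr ⟨le_rfl, by omega⟩⟩
    simp only [Finset.mem_Icc] at hi ⊢; omega
  have hnum : Tendsto
      (fun α : ℝ => (∑ i ∈ Finset.Icc 1 (T - t), gm.toClaimsBase.C i (t + 1) α ω) / α)
      atTop (𝓝 (L * m2)) := by
    have h := tendsto_finset_sum (Finset.Icc 1 (T - t)) (fun i hi => (hω i hi).2)
    simpa [Finset.sum_div, Finset.sum_mul, hL] using h
  have hden : Tendsto
      (fun α : ℝ => (∑ i ∈ Finset.Icc 1 (T - t), gm.toClaimsBase.C i t α ω) / α)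
      atTop (𝓝 (L * m1)) := by
    have h := tendsto_finset_sum (Finset.Icc 1 (T - t)) (fun i hi => (hω i hi).1)
    simpa [Finset.sum_div, Finset.sum_mul, hL] using h
  have hdne : L * m1 ≠ 0 := ne_of_gt (mul_pos hLpos hm1pos)
  have hdiv := hnum.div hden hdne
  have hval : L * m2 / (L * m1) = gm.toClaimsBase.flim t := by
    rw [mul_div_mul_left m2 m1 (ne_of_gt hLpos)]
    rfl
  rw [hval] at hdiv
  refine hdiv.congr' ?_
  filter_upwards [eventually_gt_atTop (0 : ℝ)] with α hα
  have hratio : ∀ a b : ℝ, (a / α) / (b / α) = a / b := by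
    intro a b
    rcases eq_or_ne b 0 with hb | hb
    · simp [hb]
    · field_simp
  exact hratio _ _
end
end

section
/- (Theorem 1, part 2.) Under the general model, for each i ∈ {2,…,T}, the ratio (C^α_{i,T−i+1} · Π_{t=T−i+1}^{T−1} f̂_t) / C^α_{i,T} converges almost surely to 1 as α → ∞, where f̂_t = (Σ_{j=1}^{T−t} C^α_{j,t+1})/(Σ_{j=1}^{T−t} C^α_{j,t}). -/
open MeasureTheory ProbabilityTheory Filter Finset Topology

noncomputable section

open ChainLadder

section Aux

variable {Ω : Type*} [MeasurableSpace Ω] {μ : Measure Ω} {T : ℕ}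

private lemma meas_g (t : ℕ) : Measurable (fun p : ℕ × ℝ => if p.1 ≤ t then p.2 else 0) := by
  exact Measurable.ite (measurableSet_le measurable_fst measurable_const)
    measurable_snd measurable_const

private lemma int_Z0 (gm : ClaimsBase Ω μ T) : Integrable gm.Z0 μ := by
  have : IsProbabilityMeasure μ := gm.prob
  have h1 : Integrable (fun ω => gm.Z0 ω ^ 2 + 1) μ := gm.sq_int.add (integrable_const 1)
  refine h1.mono gm.meas_Z0.aestronglyMeasurable ?_
  filter_upwards with ω
  simp only [Real.norm_eq_abs]
  nlinarith [sq_nonneg (|gm.Z0 ω| - 1), abs_nonneg (gm.Z0 ω), sq_abs (gm.Z0 ω),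
    abs_nonneg (gm.Z0 ω ^ 2 + 1), le_abs_self (gm.Z0 ω ^ 2 + 1)]

private lemma int_gZ0 (gm : ClaimsBase Ω μ T) (t : ℕ) :
    Integrable (fun ω => if gm.D0 ω ≤ t then gm.Z0 ω else 0) μ := by
  refine (int_Z0 gm).mono ?_ ?_
  · exact (Measurable.ite (measurableSet_le gm.meas_D0 measurable_const)
      gm.meas_Z0 measurable_const).aestronglyMeasurable
  · filter_upwards with ω
    by_cases h : gm.D0 ω ≤ t <;> simp [h]

private lemma int_eqZ0 (gm : ClaimsBase Ω μ T) (t : ℕ) :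
    Integrable (fun ω => if gm.D0 ω = t then gm.Z0 ω else 0) μ := by
  refine (int_Z0 gm).mono ?_ ?_
  · exact (Measurable.ite (gm.meas_D0 (MeasurableSet.singleton t))
      gm.meas_Z0 measurable_const).aestronglyMeasurable
  · filter_upwards with ω
    by_cases h : gm.D0 ω = t <;> simp [h]

private lemma meanZle_pos (gm : ClaimsBase Ω μ T) {t : ℕ} (ht : 1 ≤ t) :
    0 < gm.meanZle t := by
  have hT := gm.hT
  have hcongr : ∀ᵐ ω ∂μ, (if gm.D0 ω ≤ t then gm.Z0 ω else 0) =
      ∑ s ∈ Finset.Icc 1 (min t T), (if gm.D0 ω = s then gm.Z0 ω else 0) := by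
    filter_upwards [gm.range_D0] with ω hω
    simp only [Finset.mem_Icc] at hω
    rw [Finset.sum_ite_eq (Finset.Icc 1 (min t T)) (gm.D0 ω) (fun _ => gm.Z0 ω)]
    have : gm.D0 ω ∈ Finset.Icc 1 (min t T) ↔ gm.D0 ω ≤ t := by
      simp only [Finset.mem_Icc]
      omega
    by_cases h : gm.D0 ω ≤ t <;> simp [this, h]
  have hsum : gm.meanZle t = ∑ s ∈ Finset.Icc 1 (min t T),
      ∫ ω, (if gm.D0 ω = s then gm.Z0 ω else 0) ∂μ := by
    rw [ClaimsBase.meanZle, integral_congr_ae hcongr,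
      integral_finset_sum _ (fun s _ => int_eqZ0 gm s)]
  rw [hsum]
  refine Finset.sum_pos (fun s hs => ?_) ?_
  · refine gm.pos_mean s ?_
    simp only [Finset.mem_Icc] at hs ⊢
    omega
  · refine Finset.nonempty_Icc.mpr ?_
    omega

/-- Strong law for the accumulated claims: `C^α_{i,t}/α → λ_i E[Z 1{D ≤ t}]` a.s. -/
private lemma C_div_tendsto (gm : GeneralModel Ω μ T) {i : ℕ} (hi : i ∈ Finset.Icc 1 T)
    (t : ℕ) :
    ∀ᵐ ω ∂μ, Tendsto (fun α : ℝ => gm.toClaimsBase.C i t α ω / α) atTop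
      (𝓝 (gm.lam i * gm.toClaimsBase.meanZle t)) := by
  classical
  set g : ℕ × ℝ → ℝ := fun p => if p.1 ≤ t then p.2 else 0 with hg
  set X : ℕ → Ω → ℝ := fun k ω => if gm.D i k ω ≤ t then gm.Z i k ω else 0 with hX
  have hXg : ∀ k, X k = g ∘ (fun ω => (gm.D i k ω, gm.Z i k ω)) := fun k => rfl
  have hid : ∀ k, IdentDistrib (X k) (fun ω => g (gm.D0 ω, gm.Z0 ω)) μ μ := by
    intro k
    rw [hXg k]
    exact (gm.ident i k).comp (meas_g t)
  have hident : ∀ k, IdentDistrib (X k) (X 0) μ μ := fun k => (hid k).trans (hid 0).symm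
  have hint0 : Integrable (fun ω => g (gm.D0 ω, gm.Z0 ω)) μ := int_gZ0 gm.toClaimsBase t
  have hint : Integrable (X 0) μ := (hid 0).integrable_iff.mpr hint0
  have hindep : Pairwise (Function.onFun (IndepFun · · μ) X) := by
    intro j k hjk
    have := (gm.iid i).comp (fun _ => g) (fun _ => meas_g t)
    exact this.indepFun hjk
  have hlln := ProbabilityTheory.strong_law_ae_real X hint hindep hident
  have hEX : ∫ ω, X 0 ω ∂μ = gm.toClaimsBase.meanZle t := (hid 0).integral_eq
  filter_upwards [hlln, gm.M_lln i hi] with ω hω hM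
  have hlam : 0 < gm.lam i := gm.lam_pos i hi
  -- `M i α ω → ∞` as a real-valued function
  have hMr : Tendsto (fun α : ℝ => ((gm.M i α ω : ℕ) : ℝ)) atTop atTop := by
    have h1 : Tendsto (fun α : ℝ => ((gm.M i α ω : ℕ) : ℝ) / α * α) atTop atTop :=
      Filter.Tendsto.pos_mul_atTop hlam hM tendsto_id
    refine h1.congr' ?_
    filter_upwards [eventually_gt_atTop (0 : ℝ)] with α hα
    field_simp
  have hMnat : Tendsto (fun α : ℝ => gm.M i α ω) atTop atTop :=
    tendsto_natCast_atTop_iff.mp hMr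
  have hcomp : Tendsto (fun α : ℝ =>
      (∑ k ∈ Finset.range (gm.M i α ω), X k ω) / (gm.M i α ω : ℝ)) atTop
      (𝓝 (∫ ω, X 0 ω ∂μ)) := hω.comp hMnat
  have key : ∀ α : ℝ, gm.toClaimsBase.C i t α ω / α =
      ((∑ k ∈ Finset.range (gm.M i α ω), X k ω) / (gm.M i α ω : ℝ)) *
        ((gm.M i α ω : ℝ) / α) := by
    intro α
    have hC : gm.toClaimsBase.C i t α ω = ∑ k ∈ Finset.range (gm.M i α ω), X k ω := rfl
    rw [hC]
    rcases eq_or_ne (gm.M i α ω) 0 with h | h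
    · simp [h]
    · rw [div_mul_div_comm, mul_comm ((gm.M i α ω : ℝ)) α, mul_div_mul_right]
      exact_mod_cast h
  have := hcomp.mul hM
  rw [hEX] at this
  refine Tendsto.congr (fun α => (key α).symm) ?_
  convert this using 2
  ring

end Aux

/-- Theorem 1, part 2: a.s. consistency of the chain ladder predictor. -/
theorem chain_ladder_predictor_consistency
    {Ω : Type*} [MeasurableSpace Ω] {μ : Measure Ω} {T : ℕ}
    (gm : GeneralModel Ω μ T) :
    ∀ i ∈ Finset.Icc 2 T,
      ∀ᵐ ω ∂μ, Tendsto (fun α : ℝ =>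
          gm.toClaimsBase.C i (T - i + 1) α ω *
            gm.toClaimsBase.fhatProd (T - i + 1) (T - 1) α ω /
            gm.toClaimsBase.C i T α ω)
        atTop (𝓝 1) := by
  classical
  intro i hi
  simp only [Finset.mem_Icc] at hi
  have hT := gm.hT
  have key : ∀ᵐ ω ∂μ, ∀ j : ℕ, ∀ t : ℕ, j ∈ Finset.Icc 1 T →
      Tendsto (fun α : ℝ => gm.toClaimsBase.C j t α ω / α) atTop
        (𝓝 (gm.lam j * gm.toClaimsBase.meanZle t)) := by
    rw [ae_all_iff]
    intro j
    rw [ae_all_iff]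
    intro t
    by_cases hj : j ∈ Finset.Icc 1 T
    · filter_upwards [C_div_tendsto gm hj t] with ω h _
      exact h
    · filter_upwards with ω hj'
      exact absurd hj' hj
  filter_upwards [key] with ω hC
  set a : ℕ := T - i + 1 with ha
  have hi1 : i ∈ Finset.Icc 1 T := by simp only [Finset.mem_Icc]; omega
  have ha1 : 1 ≤ a := by omega
  have haT : a ≤ T := by omega
  -- convergence of each estimated development factor
  have hfhat : ∀ t ∈ Finset.Icc a (T - 1),
      Tendsto (fun α : ℝ => gm.toClaimsBase.fhat t α ω) atTop
        (𝓝 (gm.toClaimsBase.flim t)) := by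
    intro t ht
    simp only [Finset.mem_Icc] at ht
    have ht1 : 1 ≤ t := by omega
    have ht2 : t + 1 ≤ T := by omega
    have hTt : 1 ≤ T - t := by omega
    have hsub : ∀ j ∈ Finset.Icc 1 (T - t), j ∈ Finset.Icc 1 T := by
      intro j hj
      simp only [Finset.mem_Icc] at hj ⊢
      omega
    set L : ℝ := ∑ j ∈ Finset.Icc 1 (T - t), gm.lam j with hL
    have hLpos : 0 < L := by
      refine Finset.sum_pos (fun j hj => gm.lam_pos j (hsub j hj)) ?_
      exact Finset.nonempty_Icc.mpr hTt
    have hnum : Tendsto (fun α : ℝ =>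
        (∑ j ∈ Finset.Icc 1 (T - t), gm.toClaimsBase.C j (t + 1) α ω) / α) atTop
        (𝓝 (L * gm.toClaimsBase.meanZle (t + 1))) := by
      have := tendsto_finset_sum (Finset.Icc 1 (T - t))
        (fun j hj => hC j (t + 1) (hsub j hj))
      rw [← Finset.sum_mul] at this
      refine this.congr fun α => ?_
      rw [Finset.sum_div]
    have hden : Tendsto (fun α : ℝ =>
        (∑ j ∈ Finset.Icc 1 (T - t), gm.toClaimsBase.C j t α ω) / α) atTop
        (𝓝 (L * gm.toClaimsBase.meanZle t)) := by
      have := tendsto_finset_sum (Finset.Icc 1 (T - t))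
        (fun j hj => hC j t (hsub j hj))
      rw [← Finset.sum_mul] at this
      refine this.congr fun α => ?_
      rw [Finset.sum_div]
    have hdpos : 0 < L * gm.toClaimsBase.meanZle t :=
      mul_pos hLpos (meanZle_pos gm.toClaimsBase ht1)
    have hquot := hnum.div hden hdpos.ne'
    have hflim : (L * gm.toClaimsBase.meanZle (t + 1)) / (L * gm.toClaimsBase.meanZle t) =
        gm.toClaimsBase.flim t := by
      rw [mul_div_mul_left _ _ hLpos.ne']
      rfl
    rw [hflim] at hquot
    refine hquot.congr' ?_
    filter_upwards [eventually_gt_atTop (0 : ℝ)] with α hα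
    simp only [Pi.div_apply]
    rw [div_div_div_cancel_right₀ hα.ne']
    rfl
  have hprod : Tendsto (fun α : ℝ => gm.toClaimsBase.fhatProd a (T - 1) α ω) atTop
      (𝓝 (∏ s ∈ Finset.Icc a (T - 1), gm.toClaimsBase.flim s)) :=
    tendsto_finset_prod (Finset.Icc a (T - 1)) (fun s hs => hfhat s hs)
  -- telescoping identity
  have htel : ∀ b : ℕ, 1 ≤ a → a ≤ b + 1 → b + 1 ≤ T →
      gm.toClaimsBase.meanZle a * ∏ s ∈ Finset.Icc a b, gm.toClaimsBase.flim s =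
        gm.toClaimsBase.meanZle (b + 1) := by
    intro b
    induction b with
    | zero =>
      intro h1 h2 _
      have : a = 1 := by omega
      simp [this]
    | succ b ih =>
      intro h1 h2 h3
      rcases eq_or_lt_of_le h2 with h | h
      · rw [← h, Finset.Icc_eq_empty (by omega)]
        simp
      · rw [Finset.prod_Icc_succ_top (by omega : a ≤ b + 1), ← mul_assoc,
          ih h1 (by omega) (by omega)]
        have hne : gm.toClaimsBase.meanZle (b + 1) ≠ 0 :=
          (meanZle_pos gm.toClaimsBase (by omega : 1 ≤ b + 1)).ne'
        have hfl : gm.toClaimsBase.flim (b + 1) =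
            gm.toClaimsBase.meanZle (b + 2) / gm.toClaimsBase.meanZle (b + 1) := rfl
        rw [hfl, mul_div_assoc', mul_comm, mul_div_assoc, div_self hne, mul_one]
  have hnum := (hC i a hi1).mul hprod
  have hden := hC i T hi1
  have hdpos : 0 < gm.lam i * gm.toClaimsBase.meanZle T :=
    mul_pos (gm.lam_pos i hi1) (meanZle_pos gm.toClaimsBase (by omega : 1 ≤ T))
  have hquot := hnum.div hden hdpos.ne'
  have hone : (gm.lam i * gm.toClaimsBase.meanZle a *
      ∏ s ∈ Finset.Icc a (T - 1), gm.toClaimsBase.flim s) /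
      (gm.lam i * gm.toClaimsBase.meanZle T) = 1 := by
    have h1 := htel (T - 1) ha1 (by omega) (by omega)
    have h2 : T - 1 + 1 = T := by omega
    rw [h2] at h1
    rw [mul_assoc, h1]
    exact div_self hdpos.ne'
  rw [hone] at hquot
  refine hquot.congr' ?_
  filter_upwards [eventually_gt_atTop (0 : ℝ)] with α hα
  simp only [Pi.div_apply]
  rw [div_mul_eq_mul_div, div_div_div_cancel_right₀ hα.ne']
end
end

section
/- If the generic pair (D,Z) has independent components D and Z, with q_s = P(D = s), then for each t ∈ {1,…,T−1} the limit development factor f_t = E[Z·1{D ≤ t+1}]/E[Z·1{D ≤ t}] equals (Σ_{s=1}^{t+1} q_s)/(Σ_{s=1}^{t} q_s), and for t ≤ T−2 the limit variance parameter σ²_t = (f_t − 1)·(E[Z²·1{D=t+1}]/E[Z·1{D=t+1}] + (f_t − 1)·E[Z²·1{D≤t}]/E[Z·1{D≤t}]) equals (f_t − 1)·f_t·E[Z²]/E[Z] = (q_{t+1}·Σ_{s=1}^{t+1}q_s)/(Σ_{s=1}^{t}q_s)² · E[Z²]/E[Z]. -/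
open MeasureTheory ProbabilityTheory Filter Finset Topology

noncomputable section

open ChainLadder


private lemma indep_indicator_integral
    {Ω : Type*} [MeasurableSpace Ω] {μ : Measure Ω} [IsProbabilityMeasure μ]
    (D0 : Ω → ℕ) (W : Ω → ℝ) (hD0 : Measurable D0) (hW : Integrable W μ)
    (h : IndepFun D0 W μ) (p : ℕ → Prop) [DecidablePred p] :
    ∫ ω, (if p (D0 ω) then W ω else 0) ∂μ
      = (μ {ω | p (D0 ω)}).toReal * ∫ ω, W ω ∂μ := by
  have hX : IndepFun (fun ω => if p (D0 ω) then (1:ℝ) else 0) W μ :=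
    h.comp (measurable_from_top : Measurable fun n => if p n then (1:ℝ) else 0) measurable_id
  have hmX : Measurable (fun ω => if p (D0 ω) then (1:ℝ) else 0) :=
    (measurable_from_top : Measurable fun n => if p n then (1:ℝ) else 0).comp hD0
  have hXi : Integrable (fun ω => if p (D0 ω) then (1:ℝ) else 0) μ := by
    apply Integrable.mono' (integrable_const (1:ℝ)) hmX.aestronglyMeasurable
    filter_upwards with ω
    split_ifs <;> simp
  have hmul := hX.integral_mul_eq_mul_integral hXi.1 hW.1
  have heq : ((fun ω => if p (D0 ω) then (1:ℝ) else 0) * W)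
      = fun ω => if p (D0 ω) then W ω else 0 := by
    funext ω; simp only [Pi.mul_apply]; split_ifs <;> simp
  rw [heq] at hmul
  rw [hmul]
  congr 1
  have hset : MeasurableSet {ω | p (D0 ω)} := hD0 trivial
  have hind : (fun ω => if p (D0 ω) then (1:ℝ) else 0)
      = Set.indicator {ω | p (D0 ω)} (fun _ => (1:ℝ)) := by
    funext ω; simp [Set.indicator_apply, Set.mem_setOf_eq]
  rw [hind, integral_indicator_const _ hset]; simp; rfl

/-- Simplification of the limiting development factors and variance parameters when
`D` and `Z` are independent. -/
theorem flim_sigmaSq_of_indep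
    {Ω : Type*} [MeasurableSpace Ω] {μ : Measure Ω} [IsProbabilityMeasure μ] {T : ℕ}
    (hT : 2 ≤ T) (D0 : Ω → ℕ) (Z0 : Ω → ℝ)
    (hD0 : Measurable D0) (hZ0 : Measurable Z0)
    (hrange : ∀ᵐ ω ∂μ, D0 ω ∈ Finset.Icc 1 T)
    (hsq : Integrable (fun ω => (Z0 ω) ^ 2) μ)
    (hpos : ∀ t ∈ Finset.Icc 1 T, 0 < ∫ ω, (if D0 ω = t then Z0 ω else 0) ∂μ)
    (hindep : IndepFun D0 Z0 μ)
    (q : ℕ → ℝ) (hq : ∀ s, q s = (μ {ω | D0 ω = s}).toReal)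
    (f : ℕ → ℝ)
    (hf : ∀ t, f t = (∫ ω, (if D0 ω ≤ t + 1 then Z0 ω else 0) ∂μ) /
        (∫ ω, (if D0 ω ≤ t then Z0 ω else 0) ∂μ))
    (σ2 : ℕ → ℝ)
    (hσ : ∀ t, σ2 t = (f t - 1) *
        ((∫ ω, (if D0 ω = t + 1 then (Z0 ω) ^ 2 else 0) ∂μ) /
            (∫ ω, (if D0 ω = t + 1 then Z0 ω else 0) ∂μ) +
          (f t - 1) *
            ((∫ ω, (if D0 ω ≤ t then (Z0 ω) ^ 2 else 0) ∂μ) /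
              (∫ ω, (if D0 ω ≤ t then Z0 ω else 0) ∂μ)))) :
    ∀ t ∈ Finset.Icc 1 (T - 1),
      f t = (∑ s ∈ Finset.Icc 1 (t + 1), q s) / (∑ s ∈ Finset.Icc 1 t, q s) ∧
      (t ≤ T - 2 →
        σ2 t = (f t - 1) * f t * ((∫ ω, (Z0 ω) ^ 2 ∂μ) / (∫ ω, Z0 ω ∂μ)) ∧
        σ2 t = (q (t + 1) * ∑ s ∈ Finset.Icc 1 (t + 1), q s) /
            (∑ s ∈ Finset.Icc 1 t, q s) ^ 2 *
            ((∫ ω, (Z0 ω) ^ 2 ∂μ) / (∫ ω, Z0 ω ∂μ))) := by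
  -- basic integrability
  have hZint : Integrable Z0 μ := by
    have : MemLp Z0 2 μ := (memLp_two_iff_integrable_sq hZ0.aestronglyMeasurable).2 hsq
    exact this.integrable (by norm_num)
  have hindep2 : IndepFun D0 (fun ω => Z0 ω ^ 2) μ :=
    hindep.comp measurable_id (measurable_id.pow_const 2)
  set I := ∫ ω, Z0 ω ∂μ with hIdef
  set J := ∫ ω, Z0 ω ^ 2 ∂μ with hJdef
  -- key integral identities
  have keyeq : ∀ s : ℕ, ∫ ω, (if D0 ω = s then Z0 ω else 0) ∂μ = q s * I := by
    intro s
    rw [indep_indicator_integral D0 Z0 hD0 hZint hindep (· = s), hq s]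
  have keysqeq : ∀ s : ℕ, ∫ ω, (if D0 ω = s then (Z0 ω) ^ 2 else 0) ∂μ = q s * J := by
    intro s
    rw [indep_indicator_integral D0 (fun ω => Z0 ω ^ 2) hD0 hsq hindep2 (· = s), hq s]
  have keyle : ∀ t' : ℕ, ∫ ω, (if D0 ω ≤ t' then Z0 ω else 0) ∂μ
      = (μ {ω | D0 ω ≤ t'}).toReal * I :=
    fun t' => indep_indicator_integral D0 Z0 hD0 hZint hindep (· ≤ t')
  have keysqle : ∀ t' : ℕ, ∫ ω, (if D0 ω ≤ t' then (Z0 ω) ^ 2 else 0) ∂μ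
      = (μ {ω | D0 ω ≤ t'}).toReal * J :=
    fun t' => indep_indicator_integral D0 (fun ω => Z0 ω ^ 2) hD0 hsq hindep2 (· ≤ t')
  -- probability of {D0 ≤ t'} as a sum
  have hple : ∀ t' : ℕ, 1 ≤ t' → (μ {ω | D0 ω ≤ t'}).toReal = ∑ s ∈ Finset.Icc 1 t', q s := by
    intro t' h1
    have hsets : {ω | D0 ω ≤ t'} =ᵐ[μ] ⋃ s ∈ Finset.Icc 1 t', {ω | D0 ω = s} := by
      rw [Filter.eventuallyEq_set]
      filter_upwards [hrange] with ω hω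
      simp only [Finset.mem_Icc] at hω
      simp only [Set.mem_setOf_eq, Set.mem_iUnion, Finset.mem_Icc]
      constructor
      · intro h; exact ⟨D0 ω, ⟨⟨hω.1, h⟩, rfl⟩⟩
      · rintro ⟨s, ⟨⟨_, hs2⟩, rfl⟩⟩; exact hs2
    have hdisj : (↑(Finset.Icc 1 t') : Set ℕ).PairwiseDisjoint (fun s => {ω | D0 ω = s}) := by
      intro a _ b _ hab
      simp only [Function.onFun, Set.disjoint_left, Set.mem_setOf_eq]
      rintro ω rfl h; exact hab h
    rw [measure_congr hsets, measure_biUnion_finset hdisj (fun s _ => hD0 (MeasurableSet.singleton s)),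
      ENNReal.toReal_sum (fun s _ => measure_ne_top μ _)]
    exact Finset.sum_congr rfl fun s _ => (hq s).symm
  -- positivity
  have hIpos : 0 < I := by
    have h1 := hpos 1 (by simp [Finset.mem_Icc]; omega)
    rw [keyeq 1] at h1
    have hq1 : 0 ≤ q 1 := by rw [hq]; exact ENNReal.toReal_nonneg
    nlinarith
  have hqpos : ∀ s, 1 ≤ s → s ≤ T → 0 < q s := by
    intro s h1 h2
    have h3 := hpos s (by simp [Finset.mem_Icc]; omega)
    rw [keyeq s] at h3
    nlinarith
  have hApos : ∀ t', 1 ≤ t' → t' ≤ T → 0 < ∑ s ∈ Finset.Icc 1 t', q s := by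
    intro t' h1 h2
    apply Finset.sum_pos
    · intro s hs; simp only [Finset.mem_Icc] at hs; exact hqpos s hs.1 (hs.2.trans h2)
    · exact ⟨1, by simp [Finset.mem_Icc]; omega⟩
  -- main argument
  intro t ht
  simp only [Finset.mem_Icc] at ht
  obtain ⟨ht1, ht2⟩ := ht
  have htT : t + 1 ≤ T := by omega
  have hAt := hApos t ht1 (by omega)
  have hAt1 := hApos (t + 1) (by omega) htT
  have hftval : f t = (∑ s ∈ Finset.Icc 1 (t + 1), q s) / (∑ s ∈ Finset.Icc 1 t, q s) := by
    rw [hf t, keyle t, keyle (t + 1), hple t ht1, hple (t + 1) (by omega),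
      mul_div_mul_right _ _ hIpos.ne']
  refine ⟨hftval, fun _ => ?_⟩
  have hsplit : ∑ s ∈ Finset.Icc 1 (t + 1), q s
      = (∑ s ∈ Finset.Icc 1 t, q s) + q (t + 1) := Finset.sum_Icc_succ_top (by omega) q
  have hft1 : f t - 1 = q (t + 1) / ∑ s ∈ Finset.Icc 1 t, q s := by
    rw [hftval, hsplit]; field_simp; ring
  have hqt1 := hqpos (t + 1) (by omega) htT
  have hfirst : σ2 t = (f t - 1) * f t * (J / I) := by
    rw [hσ t, keyeq (t + 1), keysqeq (t + 1), keyle t, keysqle t,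
      mul_div_mul_left _ _ hqt1.ne']
    rw [hple t ht1, mul_div_mul_left _ _ hAt.ne']
    ring
  refine ⟨hfirst, ?_⟩
  have hcomb : q (t + 1) / (∑ s ∈ Finset.Icc 1 t, q s) *
      ((∑ s ∈ Finset.Icc 1 (t + 1), q s) / (∑ s ∈ Finset.Icc 1 t, q s))
      = (q (t + 1) * ∑ s ∈ Finset.Icc 1 (t + 1), q s) / (∑ s ∈ Finset.Icc 1 t, q s) ^ 2 := by
    rw [div_mul_div_comm, sq]
  rw [hfirst, hft1, hftval, hcomb]
end
end

section
/- (Transformation of development factors into delay probabilities.) Under the general model, the random vector ( 1/Π_{s=1}^{T−1} f̂_s , (f̂_1 − 1)/Π_{s=1}^{T−1} f̂_s , (f̂_2 − 1)·f̂_1/Π_{s=1}^{T−1} f̂_s , … , (f̂_{T−1} − 1)·Π_{s=1}^{T−2} f̂_s / Π_{s=1}^{T−1} f̂_s ) converges almost surely, as α → ∞, to (q̃_1,…,q̃_T), where q̃_t = E[Z·1{D=t}]/E[Z]. In particular, if D and Z are independent, or if Z ≡ 1, then (q̃_1,…,q̃_T) = (P(D=1),…,P(D=T)). -/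
open MeasureTheory ProbabilityTheory Filter Finset Topology

noncomputable section

open ChainLadder

namespace CLAux
open ChainLadder

variable {Ω : Type*} [MeasurableSpace Ω] {μ : Measure Ω} {T : ℕ}

lemma intZ0 (cb : ClaimsBase Ω μ T) : Integrable cb.Z0 μ := by
  haveI := cb.prob
  exact ((memLp_two_iff_integrable_sq cb.meas_Z0.aestronglyMeasurable).2 cb.sq_int).integrable
    (by norm_num)

lemma intIfLe (cb : ClaimsBase Ω μ T) (t : ℕ) :
    Integrable (fun ω => if cb.D0 ω ≤ t then cb.Z0 ω else 0) μ := by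
  refine (intZ0 cb).norm.mono' ?_ ?_
  · exact (Measurable.ite (cb.meas_D0 measurableSet_Iic) cb.meas_Z0
      measurable_const).aestronglyMeasurable
  · filter_upwards with ω
    by_cases h : cb.D0 ω ≤ t <;> simp [h]

lemma intIfEq (cb : ClaimsBase Ω μ T) (t : ℕ) :
    Integrable (fun ω => if cb.D0 ω = t then cb.Z0 ω else 0) μ := by
  refine (intZ0 cb).norm.mono' ?_ ?_
  · exact (Measurable.ite (cb.meas_D0 (MeasurableSet.singleton t)) cb.meas_Z0
      measurable_const).aestronglyMeasurable
  · filter_upwards with ω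
    by_cases h : cb.D0 ω = t <;> simp [h]

lemma meanZle_sum (cb : ClaimsBase Ω μ T) (t : ℕ) :
    cb.meanZle t = ∑ s ∈ Finset.Icc 1 t, cb.meanZeq s := by
  rw [show (∑ s ∈ Finset.Icc 1 t, cb.meanZeq s)
      = ∫ ω, ∑ s ∈ Finset.Icc 1 t, (if cb.D0 ω = s then cb.Z0 ω else 0) ∂μ from
    (integral_finset_sum _ fun s _ => intIfEq cb s).symm]
  refine integral_congr_ae ?_
  filter_upwards [cb.range_D0] with ω hω
  rw [Finset.mem_Icc] at hω
  rw [Finset.sum_ite_eq (Finset.Icc 1 t) (cb.D0 ω) (fun _ => cb.Z0 ω)]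
  simp [Finset.mem_Icc, hω.1]

lemma meanZle_pos (cb : ClaimsBase Ω μ T) {t : ℕ} (h1 : 1 ≤ t) (h2 : t ≤ T) :
    0 < cb.meanZle t := by
  rw [meanZle_sum]
  refine Finset.sum_pos (fun s hs => ?_) ⟨1, Finset.mem_Icc.2 ⟨le_refl 1, h1⟩⟩
  rw [Finset.mem_Icc] at hs
  exact cb.pos_mean s (Finset.mem_Icc.2 ⟨hs.1, hs.2.trans h2⟩)

lemma meanZ_eq (cb : ClaimsBase Ω μ T) : cb.meanZ = cb.meanZle T := by
  refine integral_congr_ae ?_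
  filter_upwards [cb.range_D0] with ω hω
  rw [Finset.mem_Icc] at hω
  simp [hω.2]

lemma meanZle_succ (cb : ClaimsBase Ω μ T) (m : ℕ) :
    cb.meanZle (m + 1) = cb.meanZle m + cb.meanZeq (m + 1) := by
  rw [meanZle_sum, meanZle_sum, Finset.sum_Icc_succ_top (by omega)]

lemma flimProd_eq (cb : ClaimsBase Ω μ T) : ∀ n, n + 1 ≤ T →
    cb.flimProd 1 n = cb.meanZle (n + 1) / cb.meanZle 1 := by
  have hT := cb.hT
  intro n
  induction n with
  | zero =>
    intro _
    simp only [ClaimsBase.flimProd, Finset.Icc_eq_empty (by omega : ¬(1:ℕ) ≤ 0),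
      Finset.prod_empty]
    rw [eq_comm, div_self (meanZle_pos cb le_rfl (by omega)).ne']
  | succ n ih =>
    intro h
    have h1 : cb.meanZle (n + 1) ≠ 0 := (meanZle_pos cb (by omega) (by omega)).ne'
    have h0 : cb.meanZle 1 ≠ 0 := (meanZle_pos cb le_rfl (by omega)).ne'
    rw [ClaimsBase.flimProd, Finset.prod_Icc_succ_top (by omega)]
    rw [show (∏ s ∈ Finset.Icc 1 n, cb.flim s) = cb.flimProd 1 n from rfl, ih (by omega)]
    rw [show cb.flim (n + 1) = cb.meanZle (n + 2) / cb.meanZle (n + 1) from rfl]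
    field_simp

lemma row_lln (gm : GeneralModel Ω μ T) {i : ℕ} (hi : i ∈ Finset.Icc 1 T) (t : ℕ) :
    ∀ᵐ ω ∂μ, Tendsto (fun α : ℝ => gm.toClaimsBase.C i t α ω / α) atTop
      (𝓝 (gm.lam i * gm.toClaimsBase.meanZle t)) := by
  haveI := gm.toClaimsBase.prob
  set cb := gm.toClaimsBase with hcb
  have hg : Measurable (fun p : ℕ × ℝ => if p.1 ≤ t then p.2 else 0) :=
    Measurable.ite (measurable_fst measurableSet_Iic) measurable_snd measurable_const
  set X : ℕ → Ω → ℝ := fun k ω => if cb.D i k ω ≤ t then cb.Z i k ω else 0 with hX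
  have hident0 : ∀ k, IdentDistrib (X k) (fun ω => if cb.D0 ω ≤ t then cb.Z0 ω else 0) μ μ :=
    fun k => (cb.ident i k).comp hg
  have hint : Integrable (X 0) μ := (hident0 0).integrable_iff.2 (intIfLe cb t)
  have hid : ∀ k, IdentDistrib (X k) (X 0) μ μ := fun k => (hident0 k).trans (hident0 0).symm
  have hindep : Pairwise (Function.onFun (IndepFun · · μ) X) := fun k l hkl =>
    ((cb.iid i).indepFun hkl).comp hg hg
  have hmean : ∫ ω, X 0 ω ∂μ = cb.meanZle t := (hident0 0).integral_eq
  have hS := ProbabilityTheory.strong_law_ae X hint hindep hid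
  rw [hmean] at hS
  filter_upwards [hS, gm.M_lln i hi] with ω hSω hMω
  have hlam := gm.lam_pos i hi
  have hMreal : Tendsto (fun α : ℝ => (cb.M i α ω : ℝ)) atTop atTop := by
    have h1 : ∀ᶠ α : ℝ in atTop, gm.lam i / 2 < (cb.M i α ω : ℝ) / α :=
      hMω.eventually (lt_mem_nhds (by linarith))
    have h2 : Tendsto (fun α : ℝ => α * (gm.lam i / 2)) atTop atTop :=
      Tendsto.atTop_mul_const (by linarith) tendsto_id
    refine tendsto_atTop_mono' _ ?_ h2
    filter_upwards [h1, eventually_gt_atTop 0] with α hα hα0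
    calc α * (gm.lam i / 2) ≤ α * ((cb.M i α ω : ℝ) / α) :=
          mul_le_mul_of_nonneg_left hα.le hα0.le
      _ = (cb.M i α ω : ℝ) := by field_simp
  have hMnat : Tendsto (fun α : ℝ => cb.M i α ω) atTop atTop :=
    tendsto_natCast_atTop_iff.1 hMreal
  have hcomp : Tendsto (fun α : ℝ =>
      ((cb.M i α ω : ℝ))⁻¹ * ∑ k ∈ Finset.range (cb.M i α ω), X k ω)
      atTop (𝓝 (cb.meanZle t)) := by
    have := hSω.comp hMnat
    simpa [Function.comp_def, smul_eq_mul] using this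
  have hmul : Tendsto (fun α : ℝ =>
      ((cb.M i α ω : ℝ))⁻¹ * (∑ k ∈ Finset.range (cb.M i α ω), X k ω) * ((cb.M i α ω : ℝ) / α))
      atTop (𝓝 (gm.lam i * cb.meanZle t)) := by
    rw [mul_comm (gm.lam i)]
    exact hcomp.mul hMω
  refine Tendsto.congr' ?_ hmul
  filter_upwards [hMnat.eventually_ge_atTop 1] with α hα
  have hM0 : ((cb.M i α ω : ℝ)) ≠ 0 := Nat.cast_ne_zero.2 (by omega)
  have hC : cb.C i t α ω = ∑ k ∈ Finset.range (cb.M i α ω), X k ω := rfl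
  show ((cb.M i α ω : ℝ))⁻¹ * (∑ k ∈ Finset.range (cb.M i α ω), X k ω)
      * ((cb.M i α ω : ℝ) / α) = cb.C i t α ω / α
  rw [hC, show ((cb.M i α ω : ℝ))⁻¹ * (∑ k ∈ Finset.range (cb.M i α ω), X k ω)
      * ((cb.M i α ω : ℝ) / α)
    = (((cb.M i α ω : ℝ))⁻¹ * (cb.M i α ω : ℝ))
      * ((∑ k ∈ Finset.range (cb.M i α ω), X k ω) / α) from by ring,
    inv_mul_cancel₀ hM0, one_mul]

lemma fhat_tendsto (gm : GeneralModel Ω μ T) :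
    ∀ᵐ ω ∂μ, ∀ s, 1 ≤ s → s ≤ T - 1 →
      Tendsto (fun α : ℝ => gm.toClaimsBase.fhat s α ω) atTop (𝓝 (gm.toClaimsBase.flim s)) := by
  haveI := gm.toClaimsBase.prob
  set cb := gm.toClaimsBase with hcb
  have hT := cb.hT
  have key : ∀ᵐ ω ∂μ, ∀ i, ∀ t, i ∈ Finset.Icc 1 T →
      Tendsto (fun α : ℝ => cb.C i t α ω / α) atTop (𝓝 (gm.lam i * cb.meanZle t)) := by
    rw [ae_all_iff]
    intro i
    rw [ae_all_iff]
    intro t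
    by_cases hi : i ∈ Finset.Icc 1 T
    · filter_upwards [row_lln gm hi t] with ω h _
      exact h
    · filter_upwards with ω h
      exact absurd h hi
  filter_upwards [key] with ω hω s hs1 hs2
  have hsub : ∀ i ∈ Finset.Icc 1 (T - s), i ∈ Finset.Icc 1 T := by
    intro i hi
    rw [Finset.mem_Icc] at hi ⊢
    exact ⟨hi.1, hi.2.trans (Nat.sub_le T s)⟩
  have hL : 0 < ∑ i ∈ Finset.Icc 1 (T - s), gm.lam i :=
    Finset.sum_pos (fun i hi => gm.lam_pos i (hsub i hi))
      ⟨1, Finset.mem_Icc.2 ⟨le_rfl, by omega⟩⟩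
  have hnum : ∀ u : ℕ, Tendsto (fun α : ℝ => (∑ i ∈ Finset.Icc 1 (T - s), cb.C i u α ω) / α)
      atTop (𝓝 ((∑ i ∈ Finset.Icc 1 (T - s), gm.lam i) * cb.meanZle u)) := by
    intro u
    simp only [Finset.sum_div, Finset.sum_mul]
    exact tendsto_finset_sum _ (fun i hi => hω i u (hsub i hi))
  have hden_ne : (∑ i ∈ Finset.Icc 1 (T - s), gm.lam i) * cb.meanZle s ≠ 0 :=
    (mul_pos hL (meanZle_pos cb hs1 (by omega))).ne'
  have hdiv := (hnum (s + 1)).div (hnum s) hden_ne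
  have hval : (∑ i ∈ Finset.Icc 1 (T - s), gm.lam i) * cb.meanZle (s + 1)
      / ((∑ i ∈ Finset.Icc 1 (T - s), gm.lam i) * cb.meanZle s) = cb.flim s :=
    mul_div_mul_left _ _ hL.ne'
  rw [hval] at hdiv
  refine Tendsto.congr' ?_ hdiv
  filter_upwards [eventually_ne_atTop (0 : ℝ)] with α hα
  show (∑ i ∈ Finset.Icc 1 (T - s), cb.C i (s + 1) α ω) / α
      / ((∑ i ∈ Finset.Icc 1 (T - s), cb.C i s α ω) / α) = cb.fhat s α ω
  rw [div_div_div_comm, div_self hα, div_one]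
  rfl

end CLAux

/-- Transformation of the development factor estimators into consistent estimators of the
delay probabilities. -/
theorem development_factors_to_delay_probabilities
    {Ω : Type*} [MeasurableSpace Ω] {μ : Measure Ω} {T : ℕ}
    (gm : GeneralModel Ω μ T) :
    (∀ᵐ ω ∂μ, ∀ t ∈ Finset.Icc 1 T,
      Tendsto (fun α : ℝ =>
          (if t = 1 then 1 else
            (gm.toClaimsBase.fhat (t - 1) α ω - 1) * gm.toClaimsBase.fhatProd 1 (t - 2) α ω) /
            gm.toClaimsBase.fhatProd 1 (T - 1) α ω)
        atTop (𝓝 (gm.toClaimsBase.meanZeq t / gm.toClaimsBase.meanZ))) ∧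
    (IndepFun gm.D0 gm.Z0 μ → ∀ t ∈ Finset.Icc 1 T,
      gm.toClaimsBase.meanZeq t / gm.toClaimsBase.meanZ = gm.toClaimsBase.probEq t) ∧
    ((∀ᵐ ω ∂μ, gm.Z0 ω = 1) → ∀ t ∈ Finset.Icc 1 T,
      gm.toClaimsBase.meanZeq t / gm.toClaimsBase.meanZ = gm.toClaimsBase.probEq t) := by
  classical
  haveI := gm.toClaimsBase.prob
  set cb := gm.toClaimsBase with hcb
  have hT := cb.hT
  have hmZ1 : 0 < cb.meanZle 1 := CLAux.meanZle_pos cb le_rfl (by omega)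
  have hmZ : cb.meanZ = cb.meanZle T := CLAux.meanZ_eq cb
  have hmZpos : 0 < cb.meanZ := by
    rw [hmZ]; exact CLAux.meanZle_pos cb (by omega) le_rfl
  have hprodT : cb.flimProd 1 (T - 1) = cb.meanZ / cb.meanZle 1 := by
    rw [CLAux.flimProd_eq cb (T - 1) (by omega), show T - 1 + 1 = T from by omega, hmZ]
  have hprodne : cb.flimProd 1 (T - 1) ≠ 0 := by
    rw [hprodT]
    exact (div_pos hmZpos hmZ1).ne'
  have hle1 : cb.meanZle 1 = cb.meanZeq 1 := by
    rw [CLAux.meanZle_sum, Finset.Icc_self, Finset.sum_singleton]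
  refine ⟨?_, ?_, ?_⟩
  · filter_upwards [CLAux.fhat_tendsto gm] with ω hω t ht
    rw [Finset.mem_Icc] at ht
    have hprodTend : ∀ b, b ≤ T - 1 →
        Tendsto (fun α : ℝ => cb.fhatProd 1 b α ω) atTop (𝓝 (cb.flimProd 1 b)) := by
      intro b hb
      simp only [ClaimsBase.fhatProd, ClaimsBase.flimProd]
      refine tendsto_finset_prod _ (fun s hs => ?_)
      rw [Finset.mem_Icc] at hs
      exact hω s hs.1 (hs.2.trans hb)
    by_cases ht1 : t = 1
    · subst ht1
      simp only [if_pos rfl]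
      have h := (tendsto_const_nhds (x := (1 : ℝ))).div (hprodTend (T - 1) le_rfl) hprodne
      have e : (1 : ℝ) / cb.flimProd 1 (T - 1) = cb.meanZeq 1 / cb.meanZ := by
        rw [hprodT, one_div_div, hle1]
      exact e ▸ h
    · simp only [if_neg ht1]
      have ht2 : 2 ≤ t := by omega
      have hfh : Tendsto (fun α : ℝ => cb.fhat (t - 1) α ω) atTop (𝓝 (cb.flim (t - 1))) :=
        hω (t - 1) (by omega) (by omega)
      have h := ((hfh.sub (tendsto_const_nhds (x := (1 : ℝ)))).mul (hprodTend (t - 2) (by omega))).div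
        (hprodTend (T - 1) le_rfl) hprodne
      have hm1 : cb.meanZle (t - 1) ≠ 0 := (CLAux.meanZle_pos cb (by omega) (by omega)).ne'
      have hflim : cb.flim (t - 1) = cb.meanZle t / cb.meanZle (t - 1) := by
        rw [show cb.flim (t - 1) = cb.meanZle (t - 1 + 1) / cb.meanZle (t - 1) from rfl,
          show t - 1 + 1 = t from by omega]
      have hsplit : cb.meanZle t = cb.meanZle (t - 1) + cb.meanZeq t := by
        have := CLAux.meanZle_succ cb (t - 1)
        rwa [show t - 1 + 1 = t from by omega] at this
      have hprodt2 : cb.flimProd 1 (t - 2) = cb.meanZle (t - 1) / cb.meanZle 1 := by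
        rw [CLAux.flimProd_eq cb (t - 2) (by omega), show t - 2 + 1 = t - 1 from by omega]
      have E : (cb.flim (t - 1) - 1) * cb.flimProd 1 (t - 2) / cb.flimProd 1 (T - 1)
          = cb.meanZeq t / cb.meanZ := by
        rw [hflim, hprodt2, hprodT, hsplit]
        field_simp
        ring
      exact E ▸ h
  · intro hind t ht
    have hXZ : IndepFun (fun ω => if cb.D0 ω = t then (1 : ℝ) else 0) cb.Z0 μ :=
      hind.comp (measurable_from_top (f := fun n : ℕ => if n = t then (1 : ℝ) else 0))
        measurable_id
    have hmeas : MeasurableSet {ω | cb.D0 ω = t} := cb.meas_D0 (MeasurableSet.singleton t)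
    have hmul : cb.meanZeq t = cb.probEq t * cb.meanZ := by
      have e1 : (fun ω => if cb.D0 ω = t then cb.Z0 ω else 0)
          = (fun ω => (if cb.D0 ω = t then (1 : ℝ) else 0) * cb.Z0 ω) := by
        funext ω; by_cases h : cb.D0 ω = t <;> simp [h]
      have e2 : (fun ω => if cb.D0 ω = t then (1 : ℝ) else 0)
          = Set.indicator {ω | cb.D0 ω = t} 1 := by
        funext ω
        by_cases h : cb.D0 ω = t <;> simp [Set.indicator_apply, h]
      rw [ClaimsBase.meanZeq, show (∫ ω, (if cb.D0 ω = t then cb.Z0 ω else 0) ∂μ)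
          = ∫ ω, (if cb.D0 ω = t then (1 : ℝ) else 0) * cb.Z0 ω ∂μ from by rw [e1],
        ProbabilityTheory.IndepFun.integral_fun_mul_eq_mul_integral hXZ ((measurable_const.ite hmeas measurable_const).aestronglyMeasurable)
          cb.meas_Z0.aestronglyMeasurable,
        show (∫ ω, (if cb.D0 ω = t then (1 : ℝ) else 0) ∂μ) = cb.probEq t from by
          rw [show (fun ω => if cb.D0 ω = t then (1 : ℝ) else 0) = Set.indicator {ω | cb.D0 ω = t} 1 from e2,
            integral_indicator_one hmeas]; rfl]
      rfl
    rw [hmul, mul_div_assoc, div_self hmZpos.ne', mul_one]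
  · intro hZ t ht
    have hmeas : MeasurableSet {ω | cb.D0 ω = t} := cb.meas_D0 (MeasurableSet.singleton t)
    have h1 : cb.meanZeq t = cb.probEq t := by
      rw [ClaimsBase.meanZeq, show (∫ ω, (if cb.D0 ω = t then cb.Z0 ω else 0) ∂μ)
          = ∫ ω, Set.indicator {ω | cb.D0 ω = t} (1 : Ω → ℝ) ω ∂μ from
        integral_congr_ae (by
          filter_upwards [hZ] with ω hω
          by_cases h : cb.D0 ω = t <;> simp [Set.indicator_apply, h, hω]),
        integral_indicator_one hmeas]
      rfl
    have h2 : cb.meanZ = 1 := by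
      rw [ClaimsBase.meanZ, integral_congr_ae (g := fun _ => (1 : ℝ)) hZ]
      simp
    rw [h1, h2, div_one]
end
end

section
/- (Expectation identity for the process error limit.) Let (D,Z) have independent components with D ∈ {1,…,T}, P(D = t) > 0 for all t, E[Z²] < ∞ and E[Z] > 0, and let λ_i ∈ (0,∞). With f_t = P(D ≤ t+1)/P(D ≤ t), σ²_t = (f_t − 1)·f_t·E[Z²]/E[Z], g = Π_{s=T−i+1}^{T−1} f_s, and E[H²] = λ_i·E[Z²]·P(D ≤ T−i+1), the following identity holds for each i ∈ {2,…,T}: (λ_i·E[Z²]·P(D > T−i+1) + E[H²]·(g − 1)²) / (λ_i·E[Z]·P(D ≤ T−i+1)) = Σ_{t=T−i+1}^{T−1} f_{T−i+1}⋯f_{t−1}·σ²_t·f_{t+1}²⋯f_{T−1}². -/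
open MeasureTheory ProbabilityTheory Filter Finset Topology

noncomputable section

open ChainLadder

/-- Expectation identity for the limit of the standardized process error term. -/
theorem process_error_limit_expectation
    {Ω : Type*} [MeasurableSpace Ω] {μ : Measure Ω} [IsProbabilityMeasure μ] {T : ℕ}
    (hT : 2 ≤ T) (i : ℕ) (hi : i ∈ Finset.Icc 2 T)
    (D0 : Ω → ℕ) (Z0 : Ω → ℝ) (hD0 : Measurable D0) (hZ0 : Measurable Z0)
    (hrange : ∀ᵐ ω ∂μ, D0 ω ∈ Finset.Icc 1 T)
    (hq : ∀ t ∈ Finset.Icc 1 T, 0 < (μ {ω | D0 ω = t}).toReal)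
    (hsq : Integrable (fun ω => (Z0 ω) ^ 2) μ)
    (hZpos : 0 < ∫ ω, Z0 ω ∂μ)
    (hindep : IndepFun D0 Z0 μ)
    (lam : ℝ) (hlam : 0 < lam)
    (f : ℕ → ℝ) (hf : ∀ t, f t = (μ {ω | D0 ω ≤ t + 1}).toReal / (μ {ω | D0 ω ≤ t}).toReal)
    (σ2 : ℕ → ℝ)
    (hσ : ∀ t, σ2 t = (f t - 1) * f t * ((∫ ω, (Z0 ω) ^ 2 ∂μ) / (∫ ω, Z0 ω ∂μ)))
    (g : ℝ) (hg : g = ∏ s ∈ Finset.Icc (T - i + 1) (T - 1), f s)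
    (EH2 : ℝ) (hEH2 : EH2 = lam * (∫ ω, (Z0 ω) ^ 2 ∂μ) * (μ {ω | D0 ω ≤ T - i + 1}).toReal) :
    (lam * (∫ ω, (Z0 ω) ^ 2 ∂μ) * (μ {ω | T - i + 1 < D0 ω}).toReal + EH2 * (g - 1) ^ 2) /
        (lam * (∫ ω, Z0 ω ∂μ) * (μ {ω | D0 ω ≤ T - i + 1}).toReal) =
      ∑ t ∈ Finset.Icc (T - i + 1) (T - 1),
        (∏ s ∈ Finset.Icc (T - i + 1) (t - 1), f s) * σ2 t *
          ∏ s ∈ Finset.Icc (t + 1) (T - 1), (f s) ^ 2 := by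
  -- notation
  set Zm : ℝ := ∫ ω, Z0 ω ∂μ with hZm
  set Zs : ℝ := ∫ ω, (Z0 ω) ^ 2 ∂μ with hZs
  set p : ℕ → ℝ := fun t => (μ {ω | D0 ω ≤ t}).toReal with hp
  obtain ⟨hi2, hiT⟩ := Finset.mem_Icc.mp hi
  set m : ℕ := T - i + 1 with hm
  have hm1 : 1 ≤ m := by omega
  have hmT : m ≤ T - 1 := by omega
  -- positivity of p
  have ppos : ∀ t, 1 ≤ t → 0 < p t := by
    intro t ht
    have h1 : 0 < (μ {ω | D0 ω = 1}).toReal := hq 1 (Finset.mem_Icc.mpr ⟨le_refl _, by omega⟩)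
    have hsub : {ω | D0 ω = 1} ⊆ {ω | D0 ω ≤ t} := fun ω hω => by
      simp only [Set.mem_setOf_eq] at *; omega
    exact lt_of_lt_of_le h1 (ENNReal.toReal_mono (measure_ne_top μ _) (measure_mono hsub))
  -- p T = 1
  have hpT : p T = 1 := by
    have hnull : μ {ω | D0 ω ≤ T}ᶜ = 0 := by
      refine measure_mono_null ?_ (ae_iff.mp hrange)
      intro ω hω
      simp only [Set.mem_compl_iff, Set.mem_setOf_eq, Finset.mem_Icc] at *
      omega
    have : μ {ω | D0 ω ≤ T} = 1 := by
      refine le_antisymm prob_le_one ?_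
      calc (1 : ENNReal) = μ Set.univ := (measure_univ).symm
        _ ≤ μ {ω | D0 ω ≤ T} + μ {ω | D0 ω ≤ T}ᶜ := by
            rw [← Set.union_compl_self {ω | D0 ω ≤ T}]; exact measure_union_le _ _
        _ = μ {ω | D0 ω ≤ T} := by rw [hnull, add_zero]
    simp [hp, this]
  -- complement
  have hcompl : (μ {ω | m < D0 ω}).toReal = 1 - p m := by
    have hms : MeasurableSet {ω | D0 ω ≤ m} := hD0 measurableSet_Iic
    have hset : {ω | m < D0 ω} = {ω | D0 ω ≤ m}ᶜ := by
      ext ω; simp [Set.mem_compl_iff, not_le]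
    rw [hset, measure_compl hms (measure_ne_top μ _), measure_univ,
      ENNReal.toReal_sub_of_le prob_le_one ENNReal.one_ne_top]
    simp [hp]
  -- telescoping products
  have prodkey : ∀ a n, 1 ≤ a → ∏ s ∈ Finset.range n, f (a + s) = p (a + n) / p a := by
    intro a n ha
    induction n with
    | zero => simp [div_self (ppos a ha).ne']
    | succ n ih =>
      rw [Finset.prod_range_succ, ih, hf (a + n)]
      have h1 := (ppos a ha).ne'
      have h2 := (ppos (a + n) (by omega)).ne'
      have h3 : (μ {ω | D0 ω ≤ a + n + 1}).toReal = p (a + n + 1) := rfl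
      have h4 : (μ {ω | D0 ω ≤ a + n}).toReal = p (a + n) := rfl
      rw [h3, h4]
      field_simp
      ring
  have prodIcc : ∀ a b, 1 ≤ a → a ≤ b + 1 → ∏ s ∈ Finset.Icc a b, f s = p (b + 1) / p a := by
    intro a b ha hab
    rw [← Finset.Ico_add_one_right_eq_Icc, Finset.prod_Ico_eq_prod_range, prodkey a (b + 1 - a) ha]
    congr 1
    · congr 1; omega
  -- g = 1 / p m
  have hg1 : g = (p m)⁻¹ := by
    rw [hg, prodIcc m (T - 1) hm1 (by omega)]
    have : T - 1 + 1 = T := by omega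
    rw [this, hpT, one_div]
  -- RHS: rewrite as telescoping sum
  have hRHS : ∑ t ∈ Finset.Icc m (T - 1),
      (∏ s ∈ Finset.Icc m (t - 1), f s) * σ2 t * ∏ s ∈ Finset.Icc (t + 1) (T - 1), (f s) ^ 2
      = (Zs / Zm / p m) * ((p m)⁻¹ - 1) := by
    rw [← Finset.Ico_add_one_right_eq_Icc, Finset.sum_Ico_eq_sum_range]
    have hTm : T - 1 + 1 - m = T - m := by omega
    rw [hTm]
    have hterm : ∀ j ∈ Finset.range (T - m),
        (∏ s ∈ Finset.Icc m (m + j - 1), f s) * σ2 (m + j) *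
          ∏ s ∈ Finset.Icc (m + j + 1) (T - 1), (f s) ^ 2
        = (Zs / Zm / p m) * (p (m + j))⁻¹
          - (Zs / Zm / p m) * (p (m + (j + 1)))⁻¹ := by
      intro j hj
      have hjlt : j < T - m := Finset.mem_range.mp hj
      set t := m + j with ht
      have ht1 : 1 ≤ t := by omega
      have htT : t ≤ T - 1 := by omega
      have h1 : ∏ s ∈ Finset.Icc m (t - 1), f s = p t / p m := by
        rw [prodIcc m (t - 1) hm1 (by omega)]
        congr 2; omega
      have h2 : ∏ s ∈ Finset.Icc (t + 1) (T - 1), (f s) ^ 2 = (p T / p (t + 1)) ^ 2 := by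
        rw [Finset.prod_pow, prodIcc (t + 1) (T - 1) (by omega) (by omega),
          show T - 1 + 1 = T by omega]
      have hft : f t = p (t + 1) / p t := by
        rw [hf t]
      have hpt := ppos t ht1
      have hpt1 := ppos (t + 1) (by omega)
      have hpm := ppos m hm1
      have hmj1 : m + (j + 1) = t + 1 := by omega
      rw [h1, h2, hσ (m + j), ← ht, hft, hpT, hmj1]
      have hZm0 : Zm ≠ 0 := hZpos.ne'
      field_simp
    rw [Finset.sum_congr rfl hterm,
      Finset.sum_range_sub' (f := fun j => (Zs / Zm / p m) * (p (m + j))⁻¹)]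
    have hmTm : m + (T - m) = T := by omega
    simp only [add_zero, hmTm, hpT, inv_one]
    ring
  rw [hRHS, hcompl, hEH2, hg1]
  have hpm := ppos m hm1
  have hZm0 : Zm ≠ 0 := hZpos.ne'
  have hset2 : (μ {ω | D0 ω ≤ T - i + 1}).toReal = p m := rfl
  rw [hset2]
  field_simp
  ring
end
end

section
/- (Strong law for aggregated claims columns.) Under the general model, for every t ∈ {1,…,T} and all 1 ≤ i₀ ≤ i₁ ≤ T, the normalized column sum α^{−1}·Σ_{i=i₀}^{i₁} C^α_{i,t} converges almost surely, as α → ∞, to E[Z·1{D ≤ t}]·Σ_{i=i₀}^{i₁} λ_i. -/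
open MeasureTheory ProbabilityTheory Filter Finset Topology

noncomputable section

open ChainLadder

private lemma aux_single
    {Ω : Type*} [MeasurableSpace Ω] {μ : Measure Ω} {T : ℕ}
    (gm : GeneralModel Ω μ T) {t : ℕ}
    {i : ℕ} (hi : i ∈ Finset.Icc 1 T) :
    ∀ᵐ ω ∂μ, Tendsto (fun α : ℝ => α⁻¹ * gm.toClaimsBase.C i t α ω)
      atTop (𝓝 (gm.toClaimsBase.meanZle t * gm.lam i)) := by
  haveI := gm.prob
  set g : ℕ × ℝ → ℝ := fun p => if p.1 ≤ t then p.2 else 0 with hg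
  have hgm : Measurable g := by
    apply Measurable.ite _ measurable_snd measurable_const
    exact measurable_fst (measurableSet_Iic (a := t))
  set X : ℕ → Ω → ℝ := fun k ω => if gm.D i k ω ≤ t then gm.Z i k ω else 0 with hX
  have habs : ∀ z : ℝ, |z| ≤ z ^ 2 + 1 := by
    intro z
    nlinarith [sq_nonneg (|z| - 1), abs_nonneg z, sq_abs z]
  have hident : ∀ k, IdentDistrib (X k)
      (fun ω => if gm.D0 ω ≤ t then gm.Z0 ω else 0) μ μ := by
    intro k
    exact (gm.ident i k).comp hgm
  have hZ0int : Integrable (fun ω => if gm.D0 ω ≤ t then gm.Z0 ω else 0) μ := by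
    refine Integrable.mono' (gm.sq_int.add (integrable_const 1)) ?_ ?_
    · exact ((gm.meas_Z0.ite (gm.meas_D0 measurableSet_Iic)
        measurable_const).aestronglyMeasurable)
    · filter_upwards with ω
      by_cases h : gm.D0 ω ≤ t <;> simp [h]
      · exact habs _
      · positivity
  have hint0 : Integrable (X 0) μ := (hident 0).integrable_iff.mpr hZ0int
  have hindep : Pairwise (Function.onFun (IndepFun · · μ) X) := by
    intro k l hkl
    exact ((gm.iid i).comp (fun _ => g) (fun _ => hgm)).indepFun hkl
  have hSLLN := strong_law_ae_real X hint0 hindep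
    (fun k => (hident k).trans (hident 0).symm)
  have hμX : μ[X 0] = gm.toClaimsBase.meanZle t := (hident 0).integral_eq
  rw [hμX] at hSLLN
  have hlam := gm.lam_pos i hi
  filter_upwards [hSLLN, gm.M_lln i hi] with ω hS hM
  have hMR : Tendsto (fun α : ℝ => ((gm.M i α ω : ℝ))) atTop atTop := by
    have h1 : Tendsto (fun α : ℝ => ((gm.M i α ω : ℝ) / α) * α) atTop atTop :=
      Tendsto.pos_mul_atTop hlam hM tendsto_id
    refine h1.congr' ?_
    filter_upwards [eventually_gt_atTop (0 : ℝ)] with α hα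
    field_simp
  have hMtop : Tendsto (fun α : ℝ => gm.M i α ω) atTop atTop :=
    tendsto_natCast_atTop_iff.mp hMR
  have hScomp : Tendsto
      (fun α : ℝ => (∑ k ∈ Finset.range (gm.M i α ω), X k ω) / (gm.M i α ω : ℝ))
      atTop (𝓝 (gm.toClaimsBase.meanZle t)) := hS.comp hMtop
  have hprod := hM.mul hScomp
  rw [mul_comm] at hprod
  refine hprod.congr' ?_
  filter_upwards [eventually_gt_atTop (0 : ℝ)] with α hα
  have hC : gm.toClaimsBase.C i t α ω = ∑ k ∈ Finset.range (gm.M i α ω), X k ω := rfl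
  rw [hC]
  rcases Nat.eq_zero_or_pos (gm.M i α ω) with h0 | h0
  · simp [h0]
  · have hne : ((gm.M i α ω : ℝ)) ≠ 0 := by positivity
    field_simp

/-- Strong law for aggregated claims columns. -/
theorem aggregated_columns_strong_law
    {Ω : Type*} [MeasurableSpace Ω] {μ : Measure Ω} {T : ℕ}
    (gm : GeneralModel Ω μ T) :
    ∀ t ∈ Finset.Icc 1 T, ∀ i₀ i₁ : ℕ, 1 ≤ i₀ → i₀ ≤ i₁ → i₁ ≤ T →
      ∀ᵐ ω ∂μ, Tendsto (fun α : ℝ => α⁻¹ * ∑ i ∈ Finset.Icc i₀ i₁, gm.toClaimsBase.C i t α ω)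
        atTop (𝓝 (gm.toClaimsBase.meanZle t * ∑ i ∈ Finset.Icc i₀ i₁, gm.lam i)) := by
  intro t ht i₀ i₁ h1 h2 h3
  have key : ∀ᵐ ω ∂μ, ∀ i : ℕ, i ∈ Finset.Icc i₀ i₁ →
      Tendsto (fun α : ℝ => α⁻¹ * gm.toClaimsBase.C i t α ω)
        atTop (𝓝 (gm.toClaimsBase.meanZle t * gm.lam i)) := by
    rw [ae_all_iff]
    intro i
    by_cases h : i ∈ Finset.Icc i₀ i₁
    · have hi : i ∈ Finset.Icc 1 T := by
        simp only [Finset.mem_Icc] at h ⊢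
        exact ⟨le_trans h1 h.1, le_trans h.2 h3⟩
      filter_upwards [aux_single gm hi] with ω hω _
      exact hω
    · filter_upwards with ω h'
      exact absurd h' h
  filter_upwards [key] with ω hω
  have hsum := tendsto_finset_sum (Finset.Icc i₀ i₁) (fun i hi => hω i hi)
  simpa [Finset.mul_sum] using hsum
end
end
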